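/- Let p and l be distinct odd primes. If Γ₁ and Γ₂ are maximal abelian subgroups of Γ = ψ(Γ̃) (i.e. maximal elements of the set of abelian subgroups of Γ ordered by inclusion) and Γ₁ ≠ Γ₂, then Γ₁ ∩ Γ₂ = {1}. -/

import Mathlib

open Quaternion Matrix
open scoped Classical

noncomputable section

/-- The set `Γ̃` of integer quaternions with norm `p^r l^s` and the appropriate
parity conditions. -/
def GammaTilde (p l : ℕ) : Set ℍ[ℤ] :=
  {x | (∃ r s : ℕ, Quaternion.normSq x = (p : ℤ) ^ r * (l : ℤ) ^ s) ∧
       (Quaternion.normSq x % 4 = 1 →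
          Odd x.re ∧ Even x.imI ∧ Even x.imJ ∧ Even x.imK) ∧
       (Quaternion.normSq x % 4 = 3 →
          Even x.imI ∧ Odd x.re ∧ Odd x.imJ ∧ Odd x.imK)}

/-- The set `Ã ⊆ Γ̃` of elements of positive real part and norm `p`. -/
def Atilde (p l : ℕ) : Set ℍ[ℤ] :=
  {x | x ∈ GammaTilde p l ∧ 0 < x.re ∧ Quaternion.normSq x = (p : ℤ)}

/-- The set `B̃ ⊆ Γ̃` of elements of positive real part and norm `l`. -/
def Btilde (p l : ℕ) : Set ℍ[ℤ] :=
  {y | y ∈ GammaTilde p l ∧ 0 < y.re ∧ Quaternion.normSq y = (l : ℤ)}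

/-- The projective general linear group `PGL₂(K)`: `GL₂(K)` modulo its center. -/
abbrev PGL2 (K : Type*) [Field K] : Type _ :=
  GL (Fin 2) K ⧸ Subgroup.center (GL (Fin 2) K)

/-- The matrix `M_{c,d}(x)` associated to an integer quaternion `x`. -/
def Mcd {K : Type*} [Field K] (c d : K) (x : ℍ[ℤ]) : Matrix (Fin 2) (Fin 2) K :=
  !![(x.re : K) + (x.imI : K) * c + (x.imK : K) * d,
     -(x.imI : K) * d + (x.imJ : K) + (x.imK : K) * c;
     -(x.imI : K) * d - (x.imJ : K) + (x.imK : K) * c,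
     (x.re : K) - (x.imI : K) * c - (x.imK : K) * d]

lemma det_Mcd {K : Type*} [Field K] {c d : K} (hcd : c ^ 2 + d ^ 2 + 1 = 0)
    (x : ℍ[ℤ]) : (Mcd c d x).det = ((Quaternion.normSq x : ℤ) : K) := by
  rw [Quaternion.normSq_def']
  rw [Mcd, Matrix.det_fin_two_of]
  push_cast
  linear_combination (-(x.imI : K) ^ 2 - (x.imK : K) ^ 2) * hcd

lemma det_Mcd_ne_zero {K : Type*} [Field K] [CharZero K] {c d : K}
    (hcd : c ^ 2 + d ^ 2 + 1 = 0) {x : ℍ[ℤ]} (hx : x ≠ 0) :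
    (Mcd c d x).det ≠ 0 := by
  rw [det_Mcd hcd]
  exact_mod_cast Quaternion.normSq_ne_zero.mpr hx

/-- The image of a nonzero integer quaternion in `GL₂(K)` (junk value `1` at `x = 0`). -/
def psiGL {K : Type*} [Field K] [CharZero K] (c d : K) (hcd : c ^ 2 + d ^ 2 + 1 = 0)
    (x : ℍ[ℤ]) : GL (Fin 2) K :=
  if hx : x = 0 then 1
  else Matrix.GeneralLinearGroup.mkOfDetNeZero (Mcd c d x) (det_Mcd_ne_zero hcd hx)

variable (p l : ℕ) [Fact p.Prime] [Fact l.Prime]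

/-- The map `ψ : ℍ(ℤ) → PGL₂(ℚ_p) × PGL₂(ℚ_l)` (with junk value at `0`). -/
def psi (cp dp : ℚ_[p]) (cl dl : ℚ_[l])
    (hp : cp ^ 2 + dp ^ 2 + 1 = 0) (hl : cl ^ 2 + dl ^ 2 + 1 = 0)
    (x : ℍ[ℤ]) : PGL2 ℚ_[p] × PGL2 ℚ_[l] :=
  (QuotientGroup.mk (psiGL cp dp hp x), QuotientGroup.mk (psiGL cl dl hl x))

/-- The group `Γ = ψ(Γ̃)`, as the subgroup of `PGL₂(ℚ_p) × PGL₂(ℚ_l)` generated by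
the image `ψ(Γ̃)` (this image is itself closed under multiplication and inverses,
so it coincides with the generated subgroup). -/
def Gamma (cp dp : ℚ_[p]) (cl dl : ℚ_[l])
    (hp : cp ^ 2 + dp ^ 2 + 1 = 0) (hl : cl ^ 2 + dl ^ 2 + 1 = 0) :
    Subgroup (PGL2 ℚ_[p] × PGL2 ℚ_[l]) :=
  Subgroup.closure (psi p l cp dp cl dl hp hl '' GammaTilde p l)

/-- The subgroup `Γ_p = ⟨ψ(Ã)⟩`. -/
def GammaP (cp dp : ℚ_[p]) (cl dl : ℚ_[l])
    (hp : cp ^ 2 + dp ^ 2 + 1 = 0) (hl : cl ^ 2 + dl ^ 2 + 1 = 0) :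
    Subgroup (PGL2 ℚ_[p] × PGL2 ℚ_[l]) :=
  Subgroup.closure (psi p l cp dp cl dl hp hl '' Atilde p l)

/-- The subgroup `Γ_l = ⟨ψ(B̃)⟩`. -/
def GammaL (cp dp : ℚ_[p]) (cl dl : ℚ_[l])
    (hp : cp ^ 2 + dp ^ 2 + 1 = 0) (hl : cl ^ 2 + dl ^ 2 + 1 = 0) :
    Subgroup (PGL2 ℚ_[p] × PGL2 ℚ_[l]) :=
  Subgroup.closure (psi p l cp dp cl dl hp hl '' Btilde p l)

/-- `Γ₀` is a maximal abelian subgroup of `Γ`: it is an abelian subgroup contained in `Γ`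
which is maximal among abelian subgroups of `Γ` ordered by inclusion. -/
def IsMaxAbelian {G : Type*} [Group G] (Γ Γ₀ : Subgroup G) : Prop :=
  Γ₀ ≤ Γ ∧ (∀ a ∈ Γ₀, ∀ b ∈ Γ₀, a * b = b * a) ∧
    ∀ H : Subgroup G, H ≤ Γ → (∀ a ∈ H, ∀ b ∈ H, a * b = b * a) → Γ₀ ≤ H → H = Γ₀

/-!
Every element of `Γ` is `ψ(x)` for an integer quaternion `x` congruent to `1` or `1 + j + k`
modulo `2`; in particular `x` has odd real part. If `ψ(x)` and `ψ(a)` commute, then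
`M(ax) = ±M(xa)`, and since `M` is an injective ring homomorphism, `ax = ±xa`; the minus sign would
force `re a = 0`. So commuting in `Γ` lifts to commuting quaternions. Quaternions commuting with a
non-scalar `a` have imaginary parts parallel to that of `a`, hence commute with each other. Thus
`Γ` is commutative-transitive, and in such a group a nontrivial element `g` lies in only one
maximal abelian subgroup, namely the centralizer of `g` in `Γ`.
-/

section CommTransitive

variable {G : Type*} [Group G]

def Subgroup.IsCommTransitive (Γ : Subgroup G) : Prop :=
  ∀ g ∈ Γ, g ≠ 1 → ∀ u ∈ Γ, ∀ v ∈ Γ, Commute u g → Commute v g → Commute u v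

theorem IsMaxAbelian.eq_centralizer_inf {Γ Γ₀ : Subgroup G} (hΓ : Γ.IsCommTransitive)
    (h : IsMaxAbelian Γ Γ₀) {g : G} (hg : g ≠ 1) (hg₀ : g ∈ Γ₀) :
    Γ₀ = Subgroup.centralizer {g} ⊓ Γ := by
  obtain ⟨hle, hab, hmax⟩ := h
  refine (hmax _ inf_le_right ?_ fun u hu => ⟨?_, hle hu⟩).symm
  · rintro u ⟨hug, hu⟩ v ⟨hvg, hv⟩
    exact hΓ g (hle hg₀) hg u hu v hv (Subgroup.mem_centralizer_singleton_iff.1 hug)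
      (Subgroup.mem_centralizer_singleton_iff.1 hvg)
  · exact Subgroup.mem_centralizer_singleton_iff.2 (hab u hu g hg₀)

theorem IsMaxAbelian.inf_eq_bot_of_ne {Γ Γ₁ Γ₂ : Subgroup G} (hΓ : Γ.IsCommTransitive)
    (h₁ : IsMaxAbelian Γ Γ₁) (h₂ : IsMaxAbelian Γ Γ₂) (hne : Γ₁ ≠ Γ₂) : Γ₁ ⊓ Γ₂ = ⊥ := by
  refine (Subgroup.eq_bot_iff_forall _).2 fun g ⟨hg₁, hg₂⟩ => ?_
  by_contra hg
  exact hne ((h₁.eq_centralizer_inf hΓ hg hg₁).trans (h₂.eq_centralizer_inf hΓ hg hg₂).symm)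

end CommTransitive

namespace Quaternion

variable {R : Type*} [CommRing R]

def imVec (x : ℍ[R]) : Fin 3 → R := ![x.imI, x.imJ, x.imK]

theorem imVec_eq_zero_iff {x : ℍ[R]} : x.imVec = 0 ↔ x.im = 0 := by
  simp [imVec, Quaternion.ext_iff]

theorem commute_iff_imVec_cross_eq_zero [IsDomain R] [NeZero (2 : R)] {x y : ℍ[R]} :
    Commute x y ↔ x.imVec ⨯₃ y.imVec = 0 := by
  have two_mul_eq_zero_iff {a b c : R} (h : a - b = 2 * c) : a = b ↔ c = 0 := by
    rw [← sub_eq_zero, h, mul_eq_zero, or_iff_right two_ne_zero]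
  simp only [Commute, SemiconjBy, Quaternion.ext_iff, imVec, cross_apply, re_mul, imI_mul,
    imJ_mul, imK_mul, Matrix.cons_eq_zero_iff, Matrix.zero_empty, Matrix.cons_val, and_true]
  rw [iff_true_intro (by ring : x.re * y.re - x.imI * y.imI - x.imJ * y.imJ - x.imK * y.imK =
    y.re * x.re - y.imI * x.imI - y.imJ * x.imJ - y.imK * x.imK), true_and]
  exact and_congr (two_mul_eq_zero_iff (by ring))
    (and_congr (two_mul_eq_zero_iff (by ring)) (two_mul_eq_zero_iff (by ring)))

theorem commute_of_commute_of_commute [LinearOrder R] [IsStrictOrderedRing R] {a x y : ℍ[R]}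
    (ha : a.im ≠ 0) (hx : Commute x a) (hy : Commute y a) : Commute x y := by
  rw [commute_iff_imVec_cross_eq_zero] at hx hy ⊢
  set u := x.imVec
  set v := y.imVec
  set w := a.imVec
  have hw : w ⬝ᵥ w ≠ 0 := dotProduct_self_eq_zero.not.2 (imVec_eq_zero_iff.not.2 ha)
  have parallel {z : Fin 3 → R} (hz : z ⨯₃ w = 0) : (w ⬝ᵥ w) • z = (z ⬝ᵥ w) • w := by
    rw [← sub_eq_zero, ← cross_cross_eq_smul_sub_smul', hz, map_zero]
  have : (w ⬝ᵥ w) • (w ⬝ᵥ w) • u ⨯₃ v = 0 := by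
    rw [← LinearMap.map_smul, ← LinearMap.map_smul₂, parallel hx, parallel hy]
    simp [cross_self]
  simpa [hw] using this

theorem re_eq_zero_of_mul_eq_neg_mul [LinearOrder R] [IsStrictOrderedRing R] {x a : ℍ[R]}
    (hx : x ≠ 0) (h : x * a = -(a * x)) : a.re = 0 := by
  have h0 := congrArg QuaternionAlgebra.re h
  have h1 := congrArg QuaternionAlgebra.imI h
  have h2 := congrArg QuaternionAlgebra.imJ h
  have h3 := congrArg QuaternionAlgebra.imK h
  simp only [re_mul, imI_mul, imJ_mul, imK_mul, re_neg, imI_neg, imJ_neg, imK_neg] at h0 h1 h2 h3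
  -- `h0` says `x.re a.re = x⃗ ⬝ a⃗` and `h1, h2, h3` say `x.re a⃗ = -a.re x⃗`
  have : 2 * (a.re * normSq x) = 0 := by
    rw [normSq_def']
    linear_combination x.re * h0 + x.imI * h1 + x.imJ * h2 + x.imK * h3
  simpa [hx] using this

end Quaternion

section Mcd

variable {K : Type*} [Field K] {c d : K}

theorem Mcd_one (c d : K) : Mcd c d 1 = 1 := by
  ext i j; fin_cases i <;> fin_cases j <;> simp [Mcd]

theorem Mcd_add (c d : K) (x y : ℍ[ℤ]) : Mcd c d (x + y) = Mcd c d x + Mcd c d y := by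
  ext i j; fin_cases i <;> fin_cases j <;> simp [Mcd] <;> ring

theorem Mcd_mul (hcd : c ^ 2 + d ^ 2 + 1 = 0) (x y : ℍ[ℤ]) :
    Mcd c d (x * y) = Mcd c d x * Mcd c d y := by
  ext i j
  fin_cases i <;> fin_cases j <;>
    simp only [Mcd, Matrix.mul_apply, Fin.sum_univ_two, re_mul, imI_mul, imJ_mul, imK_mul,
      Int.cast_add, Int.cast_sub, Int.cast_mul, Matrix.of_apply, Matrix.cons_val',
      Matrix.cons_val_zero, Matrix.cons_val_one, Matrix.empty_val', Matrix.cons_val_fin_one,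
      Fin.zero_eta, Fin.mk_one, Fin.isValue]
  · linear_combination (-(x.imI : K) * y.imI - (x.imK : K) * y.imK) * hcd
  · linear_combination ((x.imK : K) * y.imI - (x.imI : K) * y.imK) * hcd
  · linear_combination ((x.imI : K) * y.imK - (x.imK : K) * y.imI) * hcd
  · linear_combination (-(x.imI : K) * y.imI - (x.imK : K) * y.imK) * hcd

def McdRingHom (hcd : c ^ 2 + d ^ 2 + 1 = 0) : ℍ[ℤ] →+* Matrix (Fin 2) (Fin 2) K where
  toFun := Mcd c d
  map_one' := Mcd_one c d
  map_mul' := Mcd_mul hcd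
  map_zero' := by simpa using (Mcd_add c d 0 0).symm
  map_add' := Mcd_add c d

theorem Mcd_injective [CharZero K] (hcd : c ^ 2 + d ^ 2 + 1 = 0) :
    Function.Injective (Mcd c d) := by
  refine (injective_iff_map_eq_zero (McdRingHom hcd)).2 fun x hx => ?_
  have hdet := det_Mcd hcd x
  rw [show Mcd c d x = 0 from hx, Matrix.det_zero] at hdet
  exact normSq_eq_zero.1 (by exact_mod_cast hdet.symm)

end Mcd

theorem exists_smul_of_commute_mk {n R : Type*} [Fintype n] [DecidableEq n] [CommRing R]
    {U V : GL n R} (h : Commute (U : GL n R ⧸ Subgroup.center (GL n R)) V) :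
    ∃ r : R, ((V * U : GL n R) : Matrix n n R) = r • ((U * V : GL n R) : Matrix n n R) := by
  have hUV : ((U * V : GL n R) : GL n R ⧸ Subgroup.center (GL n R)) = (V * U : GL n R) := h
  obtain ⟨r, hr⟩ := Matrix.GeneralLinearGroup.mem_center_iff_val_mem_range_scalar.1
    (QuotientGroup.eq.1 hUV)
  refine ⟨r, ?_⟩
  rw [← mul_inv_cancel_left (U * V) (V * U), Units.val_mul _ ((U * V)⁻¹ * _), ← hr,
    Matrix.scalar_apply, ← Matrix.smul_one_eq_diagonal, Matrix.mul_smul, Matrix.mul_one]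

section PsiGL

variable {K : Type*} [Field K] [CharZero K] {c d : K} (hcd : c ^ 2 + d ^ 2 + 1 = 0)
include hcd

theorem psiGL_val {x : ℍ[ℤ]} (hx : x ≠ 0) :
    (psiGL c d hcd x : Matrix (Fin 2) (Fin 2) K) = Mcd c d x := by
  rw [psiGL, dif_neg hx]
  rfl

theorem psiGL_mul {x y : ℍ[ℤ]} (hx : x ≠ 0) (hy : y ≠ 0) :
    psiGL c d hcd (x * y) = psiGL c d hcd x * psiGL c d hcd y := by
  ext : 1
  rw [Units.val_mul, psiGL_val hcd (mul_ne_zero hx hy), psiGL_val hcd hx, psiGL_val hcd hy,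
    Mcd_mul hcd]

theorem mk_psiGL_intCast {n : ℤ} (hn : n ≠ 0) : (psiGL c d hcd n : PGL2 K) = 1 := by
  have hn' : (n : ℍ[ℤ]) ≠ 0 := fun h => hn (by simpa using congrArg QuaternionAlgebra.re h)
  rw [QuotientGroup.eq_one_iff, Matrix.GeneralLinearGroup.mem_center_iff_val_mem_range_scalar,
    psiGL_val hcd hn']
  exact ⟨n, (map_intCast (Matrix.scalar (Fin 2) : K →+* _) n).trans
    (map_intCast (McdRingHom hcd) n).symm⟩

theorem mul_eq_or_eq_neg_of_commute_mk_psiGL {x a : ℍ[ℤ]} (hx : x ≠ 0) (ha : a ≠ 0)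
    (h : Commute (psiGL c d hcd x : PGL2 K) (psiGL c d hcd a)) :
    x * a = a * x ∨ x * a = -(a * x) := by
  obtain ⟨r, hr⟩ := exists_smul_of_commute_mk h
  rw [← psiGL_mul hcd ha hx, ← psiGL_mul hcd hx ha, psiGL_val hcd (mul_ne_zero ha hx),
    psiGL_val hcd (mul_ne_zero hx ha)] at hr
  have hr2 : r ^ 2 = 1 := by
    have hdet := congrArg Matrix.det hr
    rw [Matrix.det_smul, det_Mcd hcd, det_Mcd hcd, Fintype.card_fin, normSq.map_mul,
      normSq.map_mul, mul_comm (normSq a)] at hdet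
    have hN : ((normSq x * normSq a : ℤ) : K) ≠ 0 := by
      exact_mod_cast mul_ne_zero (normSq_ne_zero.2 hx) (normSq_ne_zero.2 ha)
    exact (mul_eq_right₀ hN).1 hdet.symm
  rcases sq_eq_one_iff.1 hr2 with rfl | rfl
  · exact Or.inl (Mcd_injective hcd (by simpa using hr)).symm
  · refine Or.inr (Mcd_injective hcd ?_)
    rw [show Mcd c d (-(a * x)) = -Mcd c d (a * x) from map_neg (McdRingHom hcd) _, hr,
      neg_one_smul, neg_neg]

end PsiGL

/-- Integer quaternions congruent to `1` or `1 + j + k` modulo `2`. These two residues form a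
subgroup of `ℍ[𝔽₂]`, so this set is a monoid. -/
def parityMonoid : Submonoid ℍ[ℤ] where
  carrier := {x | (x.re : ZMod 2) = 1 ∧ (x.imI : ZMod 2) = 0 ∧ (x.imJ : ZMod 2) = x.imK}
  one_mem' := by simp
  mul_mem' := by
    rintro x y ⟨hx0, hx1, hx23⟩ ⟨hy0, hy1, hy23⟩
    have two : (2 : ZMod 2) = 0 := rfl
    simp only [Set.mem_ofPred_eq, re_mul, imI_mul, imJ_mul, imK_mul, Int.cast_add, Int.cast_sub,
      Int.cast_mul, hx0, hx1, hx23, hy0, hy1, hy23]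
    exact ⟨by linear_combination -((x.imK : ZMod 2) * y.imK) * two, by ring, by ring⟩

theorem re_ne_zero_of_mem_parityMonoid {x : ℍ[ℤ]} (hx : x ∈ parityMonoid) : x.re ≠ 0 := by
  intro h
  simpa [h] using hx.1

theorem ne_zero_of_mem_parityMonoid {x : ℍ[ℤ]} (hx : x ∈ parityMonoid) : x ≠ 0 := by
  rintro rfl
  exact re_ne_zero_of_mem_parityMonoid hx rfl

theorem star_mem_parityMonoid {x : ℍ[ℤ]} (hx : x ∈ parityMonoid) : star x ∈ parityMonoid := by
  obtain ⟨h0, h1, h23⟩ := hx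
  exact ⟨by simpa using h0, by simp [h1], by simp [h23]⟩

theorem mul_ne_neg_mul_of_mem_parityMonoid {x a : ℍ[ℤ]} (hx : x ∈ parityMonoid)
    (ha : a ∈ parityMonoid) : x * a ≠ -(a * x) := fun h =>
  re_ne_zero_of_mem_parityMonoid ha
    (re_eq_zero_of_mul_eq_neg_mul (ne_zero_of_mem_parityMonoid hx) h)

variable {p l}

theorem GammaTilde_subset_parityMonoid (hp2 : p ≠ 2) (hl2 : l ≠ 2) :
    GammaTilde p l ⊆ parityMonoid := by
  rintro x ⟨⟨r, s, hN⟩, h1, h3⟩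
  have hodd : Odd (normSq x) := hN ▸ (Int.odd_coe_nat p |>.2
    ((Fact.out : p.Prime).odd_of_ne_two hp2)).pow.mul
    (Int.odd_coe_nat l |>.2 ((Fact.out : l.Prime).odd_of_ne_two hl2)).pow
  obtain h | h : normSq x % 4 = 1 ∨ normSq x % 4 = 3 := by
    rw [Int.odd_iff] at hodd
    omega
  · obtain ⟨h0, hI, hJ, hK⟩ := h1 h
    exact ⟨ZMod.intCast_eq_one_iff_odd.2 h0, ZMod.intCast_eq_zero_iff_even.2 hI,
      by rw [ZMod.intCast_eq_zero_iff_even.2 hJ, ZMod.intCast_eq_zero_iff_even.2 hK]⟩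
  · obtain ⟨hI, h0, hJ, hK⟩ := h3 h
    exact ⟨ZMod.intCast_eq_one_iff_odd.2 h0, ZMod.intCast_eq_zero_iff_even.2 hI,
      by rw [ZMod.intCast_eq_one_iff_odd.2 hJ, ZMod.intCast_eq_one_iff_odd.2 hK]⟩

section Psi

variable {cp dp : ℚ_[p]} {cl dl : ℚ_[l]} {hcp : cp ^ 2 + dp ^ 2 + 1 = 0}
  {hcl : cl ^ 2 + dl ^ 2 + 1 = 0}

local notation "ψ" => psi p l cp dp cl dl hcp hcl

theorem psi_mul {x y : ℍ[ℤ]} (hx : x ≠ 0) (hy : y ≠ 0) : ψ (x * y) = ψ x * ψ y := by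
  simp only [psi, psiGL_mul hcp hx hy, psiGL_mul hcl hx hy, QuotientGroup.mk_mul, Prod.mk_mul_mk]

theorem psi_intCast {n : ℤ} (hn : n ≠ 0) : ψ n = 1 :=
  Prod.ext (mk_psiGL_intCast hcp hn) (mk_psiGL_intCast hcl hn)

theorem psi_star {x : ℍ[ℤ]} (hx : x ≠ 0) : ψ (star x) = (ψ x)⁻¹ := by
  refine eq_inv_of_mul_eq_one_left ?_
  rw [← psi_mul (star_ne_zero.2 hx) hx, star_mul_self]
  exact psi_intCast (normSq_ne_zero.2 hx)

theorem exists_mem_parityMonoid_psi_eq_of_mem_Gamma (hp2 : p ≠ 2) (hl2 : l ≠ 2)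
    {g : PGL2 ℚ_[p] × PGL2 ℚ_[l]} (hg : g ∈ Gamma p l cp dp cl dl hcp hcl) :
    ∃ x ∈ parityMonoid, ψ x = g := by
  induction hg using Subgroup.closure_induction with
  | mem g hg =>
    obtain ⟨x, hx, rfl⟩ := hg
    exact ⟨x, GammaTilde_subset_parityMonoid hp2 hl2 hx, rfl⟩
  | one => exact ⟨1, one_mem _, by exact_mod_cast psi_intCast one_ne_zero⟩
  | mul g h _ _ ihg ihh =>
    obtain ⟨x, hx, rfl⟩ := ihg
    obtain ⟨y, hy, rfl⟩ := ihh
    exact ⟨x * y, mul_mem hx hy,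
      psi_mul (ne_zero_of_mem_parityMonoid hx) (ne_zero_of_mem_parityMonoid hy)⟩
  | inv g _ ihg =>
    obtain ⟨x, hx, rfl⟩ := ihg
    exact ⟨star x, star_mem_parityMonoid hx, psi_star (ne_zero_of_mem_parityMonoid hx)⟩

theorem commute_of_commute_psi {x a : ℍ[ℤ]} (hx : x ∈ parityMonoid) (ha : a ∈ parityMonoid)
    (h : Commute (ψ x) (ψ a)) : Commute x a :=
  (mul_eq_or_eq_neg_of_commute_mk_psiGL hcp (ne_zero_of_mem_parityMonoid hx)
    (ne_zero_of_mem_parityMonoid ha) (congrArg Prod.fst h)).resolve_right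
    (mul_ne_neg_mul_of_mem_parityMonoid hx ha)

theorem Gamma_isCommTransitive (hp2 : p ≠ 2) (hl2 : l ≠ 2) :
    (Gamma p l cp dp cl dl hcp hcl).IsCommTransitive := by
  intro g hg hg1 u hu v hv hug hvg
  obtain ⟨a, ha, rfl⟩ := exists_mem_parityMonoid_psi_eq_of_mem_Gamma hp2 hl2 hg
  obtain ⟨x, hx, rfl⟩ := exists_mem_parityMonoid_psi_eq_of_mem_Gamma hp2 hl2 hu
  obtain ⟨y, hy, rfl⟩ := exists_mem_parityMonoid_psi_eq_of_mem_Gamma hp2 hl2 hv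
  have ha_im : a.im ≠ 0 := fun h => hg1 <| by
    rw [← re_add_im a, h, add_zero]
    exact psi_intCast (re_ne_zero_of_mem_parityMonoid ha)
  have hxy : Commute x y := commute_of_commute_of_commute ha_im
    (commute_of_commute_psi hx ha hug) (commute_of_commute_psi hy ha hvg)
  rw [Commute, SemiconjBy, ← psi_mul (ne_zero_of_mem_parityMonoid hx)
    (ne_zero_of_mem_parityMonoid hy), hxy.eq, psi_mul (ne_zero_of_mem_parityMonoid hy)
    (ne_zero_of_mem_parityMonoid hx)]

end Psi

theorem maxAbelian_inter_trivial_general (p l : ℕ) [Fact p.Prime] [Fact l.Prime]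
    (hp2 : p ≠ 2) (hl2 : l ≠ 2)
    (cp dp : ℚ_[p]) (cl dl : ℚ_[l])
    (hcp : cp ^ 2 + dp ^ 2 + 1 = 0) (hcl : cl ^ 2 + dl ^ 2 + 1 = 0)
    (Γ₁ Γ₂ : Subgroup (PGL2 ℚ_[p] × PGL2 ℚ_[l]))
    (h₁ : IsMaxAbelian (Gamma p l cp dp cl dl hcp hcl) Γ₁)
    (h₂ : IsMaxAbelian (Gamma p l cp dp cl dl hcp hcl) Γ₂)
    (hne : Γ₁ ≠ Γ₂) :
    Γ₁ ⊓ Γ₂ = ⊥ :=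
  h₁.inf_eq_bot_of_ne (Gamma_isCommTransitive hp2 hl2) h₂ hne

/-- Lemma 3: two distinct maximal abelian subgroups of `Γ` intersect trivially. -/
theorem maxAbelian_inter_trivial (p l : ℕ) [Fact p.Prime] [Fact l.Prime]
    (hp2 : p ≠ 2) (hl2 : l ≠ 2) (hpl : p ≠ l)
    (cp dp : ℚ_[p]) (cl dl : ℚ_[l])
    (hcp : cp ^ 2 + dp ^ 2 + 1 = 0) (hcl : cl ^ 2 + dl ^ 2 + 1 = 0)
    (Γ₁ Γ₂ : Subgroup (PGL2 ℚ_[p] × PGL2 ℚ_[l]))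
    (h₁ : IsMaxAbelian (Gamma p l cp dp cl dl hcp hcl) Γ₁)
    (h₂ : IsMaxAbelian (Gamma p l cp dp cl dl hcp hcl) Γ₂)
    (hne : Γ₁ ≠ Γ₂) :
    Γ₁ ⊓ Γ₂ = ⊥ :=
  maxAbelian_inter_trivial_general p l hp2 hl2 cp dp cl dl hcp hcl Γ₁ Γ₂ h₁ h₂ hne
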